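/- arXiv:1608.08800 — 4 statements merged into one kernel-verified Lean document; each statement's English description precedes it below -/
import Mathlib

section
/- Let t ≥ 1 and let G be a finite simple graph whose adjacency matrix has spectrum {(4t+1)^1, (2t−1)^{2t}, (−1)^{(t+1)^2}, (−3)^{t^2}}. Then any two distinct nonadjacent vertices x and y of G have at most 2t+2 common neighbors, i.e., μ_{x,y} ≤ 2t+2. -/
/-!
The trace of `A²` is the degree sum, and the spectrum gives `∑ λ² = (4t+1)·|V|` with every
eigenvalue at most `4t+1`; so the average degree equals the largest eigenvalue, and testing the
positive semidefinite matrix `(4t+1)I - A` against the all-ones vector shows that `G` is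
`(4t+1)`-regular. The polynomial `(λ - (2t-1))(λ + 1)` is nonnegative on the spectrum, so
`K = (A - (2t-1)I)(A + I)` is positive semidefinite. For a regular graph its diagonal entries are
`(4t+1) - (2t-1) = 2t+2` and its entry at a nonadjacent pair `x, y` is `μ_{x,y}`; testing `K`
against `e_x - e_y` gives `2μ_{x,y} ≤ 2(2t+2)`.
-/

open Polynomial Matrix SimpleGraph

/-- The `n × n`-grid: the Cartesian (box) product of two complete graphs on `Fin n`.
Vertices are pairs `(i, j)`, two distinct vertices being adjacent iff they agree in
exactly one coordinate. -/
def gridGraph (n : ℕ) : SimpleGraph (Fin n × Fin n) :=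
  (⊤ : SimpleGraph (Fin n)) □ (⊤ : SimpleGraph (Fin n))

/-- The `q`-clique extension of a graph `G`: the graph on `V × Fin q` in which `(x, i)`
and `(y, j)` are adjacent iff `x` and `y` are adjacent in `G`, or `x = y` and `i ≠ j`. -/
def cliqueExt {V : Type*} (q : ℕ) (G : SimpleGraph V) : SimpleGraph (V × Fin q) where
  Adj a b := G.Adj a.1 b.1 ∨ (a.1 = b.1 ∧ a.2 ≠ b.2)
  symm := by
    constructor
    rintro ⟨x, i⟩ ⟨y, j⟩ (h | ⟨h, hij⟩)
    · exact Or.inl h.symm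
    · exact Or.inr ⟨h.symm, hij.symm⟩
  loopless := by
    constructor
    rintro ⟨x, i⟩ (h | ⟨-, hij⟩)
    · exact G.loopless.irrefl x h
    · exact hij rfl

instance cliqueExtAdjDec {V : Type*} (q : ℕ) (G : SimpleGraph V) [DecidableRel G.Adj]
    [DecidableEq V] : DecidableRel (cliqueExt q G).Adj :=
  fun a b => inferInstanceAs (Decidable (G.Adj a.1 b.1 ∨ (a.1 = b.1 ∧ a.2 ≠ b.2)))

instance boxProdAdjDec {α β : Type*} (G : SimpleGraph α) (H : SimpleGraph β)
    [DecidableRel G.Adj] [DecidableRel H.Adj] [DecidableEq α] [DecidableEq β] :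
    DecidableRel (G □ H).Adj :=
  fun x y => inferInstanceAs (Decidable (G.Adj x.1 y.1 ∧ x.2 = y.2 ∨ H.Adj x.2 y.2 ∧ x.1 = y.1))

instance gridAdjDec (n : ℕ) : DecidableRel (gridGraph n).Adj := by
  unfold gridGraph; infer_instance

open Finset
open scoped MatrixOrder ComplexOrder

namespace Matrix.IsHermitian
variable {𝕜 n : Type*} [RCLike 𝕜] [Fintype n] [DecidableEq n] {A : Matrix n n 𝕜}

theorem trace_cfc (hA : A.IsHermitian) (f : ℝ → ℝ) :
    (cfc f A).trace = ∑ i, (f (hA.eigenvalues i) : 𝕜) := by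
  have hsplits : (cfc f A).charpoly.Splits := by
    rw [hA.charpoly_cfc_eq]; exact Splits.prod fun i _ => Splits.X_sub_C _
  rw [trace_eq_sum_roots_charpoly_of_splits hsplits, hA.charpoly_cfc_eq, roots_prod _ _
    (Finset.prod_ne_zero_iff.mpr fun i _ => X_sub_C_ne_zero _)]
  simp

theorem posSemidef_cfc (hA : A.IsHermitian) {f : ℝ → ℝ} (hf : ∀ i, 0 ≤ f (hA.eigenvalues i)) :
    (cfc f A).PosSemidef := by
  refine LE.le.posSemidef (cfc_nonneg fun x hx => ?_)
  obtain ⟨i, rfl⟩ := hA.spectrum_real_eq_range_eigenvalues ▸ hx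
  exact hf i

end Matrix.IsHermitian

theorem Matrix.PosSemidef.apply_add_apply_le {n : Type*} [Fintype n] [DecidableEq n]
    {K : Matrix n n ℝ} (hK : K.PosSemidef) (x y : n) : K x y + K y x ≤ K x x + K y y := by
  have h := hK.dotProduct_mulVec_nonneg (Pi.single x 1 - Pi.single y 1)
  simp only [star_trivial, mulVec_sub, mulVec_single, MulOpposite.op_one, one_smul,
    dotProduct_sub, sub_dotProduct, single_dotProduct, col_apply, one_mul] at h
  linarith

namespace SimpleGraph
variable {V : Type*} [Fintype V] [DecidableEq V] (G : SimpleGraph V) [DecidableRel G.Adj]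

theorem adjMatrix_mul_self_apply {α : Type*} [NonAssocSemiring α] (x y : V) :
    (G.adjMatrix α * G.adjMatrix α) x y = #(G.neighborFinset x ∩ G.neighborFinset y) := by
  rw [adjMatrix_mul_apply]
  simp only [adjMatrix_apply, sum_boole]
  congr 2
  ext u
  simp [adj_comm]

theorem isRegularOfDegree_of_roots_charpoly {k : ℕ}
    (hle : ∀ μ ∈ (G.adjMatrix ℝ).charpoly.roots, μ ≤ k)
    (hsq : ((G.adjMatrix ℝ).charpoly.roots.map (fun μ => μ ^ 2)).sum =
      (Multiset.card (G.adjMatrix ℝ).charpoly.roots : ℝ) * k) :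
    G.IsRegularOfDegree k := by
  have hA := G.isHermitian_adjMatrix ℝ
  have hle' (i : V) : hA.eigenvalues i ≤ k :=
    hle _ (by simp [hA.roots_charpoly_eq_eigenvalues])
  have hsq' : ∑ i, hA.eigenvalues i ^ 2 = Fintype.card V * k := by
    simpa [hA.roots_charpoly_eq_eigenvalues] using hsq
  have hdeg : ∑ v, (G.degree v : ℝ) = Fintype.card V * k := by
    calc ∑ v, (G.degree v : ℝ) = (G.adjMatrix ℝ ^ 2).trace := by
          simp only [sq, Matrix.trace, diag_apply, adjMatrix_mul_self_apply_self]
      _ = ∑ i, hA.eigenvalues i ^ 2 := by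
          rw [← cfc_pow_id (R := ℝ) _ 2 hA.isSelfAdjoint]
          simpa using hA.trace_cfc (· ^ 2)
      _ = Fintype.card V * k := hsq'
  set B := algebraMap ℝ (Matrix V V ℝ) k - G.adjMatrix ℝ
  have hB : B.PosSemidef := by
    have := hA.posSemidef_cfc (f := fun μ => k - μ) fun i => sub_nonneg.2 (hle' i)
    rwa [cfc_sub .., cfc_const .., cfc_id' ..] at this
  have hB1 : B *ᵥ 1 = 0 := by
    refine (hB.dotProduct_mulVec_zero_iff 1).1 ?_
    simp [B, sub_mulVec, one_dotProduct, hdeg, mul_comm]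
  intro v
  have hv : (k : ℝ) - G.degree v = 0 := by simpa [B, sub_mulVec] using congrFun hB1 v
  exact_mod_cast (sub_eq_zero.1 hv).symm

theorem card_commonNeighbors_le {k : ℕ} (hreg : G.IsRegularOfDegree k) {r s : ℝ}
    (hrs : ∀ μ ∈ (G.adjMatrix ℝ).charpoly.roots, 0 ≤ (μ - r) * (μ - s))
    {x y : V} (hxy : x ≠ y) (hnadj : ¬G.Adj x y) :
    (#(G.neighborFinset x ∩ G.neighborFinset y) : ℝ) ≤ k + r * s := by
  have hA := G.isHermitian_adjMatrix ℝ
  set K := (G.adjMatrix ℝ - algebraMap ℝ _ r) * (G.adjMatrix ℝ - algebraMap ℝ _ s)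
  have hK : K.PosSemidef := by
    have := hA.posSemidef_cfc (f := fun μ => (μ - r) * (μ - s))
      fun i => hrs _ (by simp [hA.roots_charpoly_eq_eigenvalues])
    rwa [cfc_mul .., cfc_sub .., cfc_sub .., cfc_id' .., cfc_const .., cfc_const ..] at this
  have hK_apply (u w : V) : K u w = #(G.neighborFinset u ∩ G.neighborFinset w) -
      (r + s) * G.adjMatrix ℝ u w + r * s * (1 : Matrix V V ℝ) u w := by
    simp only [K, sub_mul, mul_sub, Algebra.algebraMap_eq_smul_one, adjMatrix_mul_self_apply,
      Matrix.smul_mul, Matrix.mul_smul, mul_one, one_mul, smul_smul, Matrix.sub_apply,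
      Matrix.smul_apply, smul_eq_mul]
    ring
  have hK_xy : K x y = #(G.neighborFinset x ∩ G.neighborFinset y) := by
    simp [hK_apply, hnadj, hxy]
  have hK_yx : K y x = #(G.neighborFinset x ∩ G.neighborFinset y) := by
    simp [hK_apply, hxy.symm, adj_comm, hnadj, inter_comm]
  have hK_diag (u : V) : K u u = k + r * s := by simp [hK_apply, hreg u]
  linarith [hK.apply_add_apply_le x y, hK_diag x, hK_diag y]

end SimpleGraph

theorem stmt_8_general (t : ℕ) {V : Type*} [Fintype V] [DecidableEq V]
    (G : SimpleGraph V) [DecidableRel G.Adj]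
    (hchar : (G.adjMatrix ℝ).charpoly =
      (X - C (4 * (t : ℝ) + 1)) * (X - C (2 * (t : ℝ) - 1)) ^ (2 * t) *
        (X + 1) ^ ((t + 1) ^ 2) * (X + 3) ^ (t ^ 2)) :
    ∀ x y : V, x ≠ y → ¬G.Adj x y →
      (G.neighborFinset x ∩ G.neighborFinset y).card ≤ 2 * t + 2 := by
  intro x y hxy hnadj
  have hroots : (G.adjMatrix ℝ).charpoly.roots = {4 * (t : ℝ) + 1} +
      Multiset.replicate (2 * t) (2 * (t : ℝ) - 1) + Multiset.replicate ((t + 1) ^ 2) (-1) +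
        Multiset.replicate (t ^ 2) (-3) := by
    rw [hchar, ← roots_multiset_prod_X_sub_C (_ + _)]
    simp [Multiset.prod_replicate, mul_assoc, map_ofNat]
  have hspec : ∀ μ ∈ (G.adjMatrix ℝ).charpoly.roots,
      μ = 4 * t + 1 ∨ μ = 2 * t - 1 ∨ μ = -1 ∨ μ = -3 := by
    intro μ hμ
    simp only [hroots, Multiset.mem_add, Multiset.mem_singleton, Multiset.mem_replicate] at hμ
    tauto
  have ht : (0 : ℝ) ≤ t := t.cast_nonneg
  have hreg : G.IsRegularOfDegree (4 * t + 1) := by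
    refine G.isRegularOfDegree_of_roots_charpoly (fun μ hμ => ?_) ?_
    · push_cast
      rcases hspec μ hμ with rfl | rfl | rfl | rfl <;> linarith
    · simp only [hroots, Multiset.map_add, Multiset.map_singleton, Multiset.map_replicate,
        Multiset.sum_add, Multiset.sum_singleton, Multiset.sum_replicate, Multiset.card_add,
        Multiset.card_singleton, Multiset.card_replicate, nsmul_eq_mul]
      push_cast
      ring
  have hμ := G.card_commonNeighbors_le hreg (r := 2 * t - 1) (s := -1)
    (fun μ hμ => by rcases hspec μ hμ with rfl | rfl | rfl | rfl <;> nlinarith) hxy hnadj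
  exact_mod_cast hμ.trans_eq (by push_cast; ring : _ = ((2 * t + 2 : ℕ) : ℝ))

/-- Let `t ≥ 1` and let `G` be a finite simple graph whose adjacency matrix has spectrum
`{(4t+1)^1, (2t−1)^{2t}, (−1)^{(t+1)^2}, (−3)^{t^2}}`. Then any two distinct nonadjacent
vertices `x` and `y` of `G` have at most `2t+2` common neighbors. -/
theorem stmt_8 (t : ℕ) (ht : 1 ≤ t) {V : Type*} [Fintype V] [DecidableEq V]
    (G : SimpleGraph V) [DecidableRel G.Adj]
    (hchar : (G.adjMatrix ℝ).charpoly =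
      (X - C (4 * (t : ℝ) + 1)) * (X - C (2 * (t : ℝ) - 1)) ^ (2 * t) *
        (X + 1) ^ ((t + 1) ^ 2) * (X + 3) ^ (t ^ 2)) :
    ∀ x y : V, x ≠ y → ¬G.Adj x y →
      (G.neighborFinset x ∩ G.neighborFinset y).card ≤ 2 * t + 2 :=
  stmt_8_general t G hchar
end

section
/- Let t ≥ 1 and let G be a finite simple graph whose adjacency matrix has spectrum {(4t+1)^1, (2t−1)^{2t}, (−1)^{(t+1)^2}, (−3)^{t^2}}. Then for every vertex x of G, the number of edges of G joining two neighbors of x equals 4t^2 + 2t. -/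
open Polynomial Matrix SimpleGraph

/-!
By the trace formula, `∑ λᵢ² = ∑ deg v`, so the average degree is `4t + 1`, the largest eigenvalue;
hence `𝟙` is a top eigenvector (`(4t+1)I - A` is positive semidefinite and vanishes on `𝟙` as a
quadratic form), i.e. `G` is `(4t+1)`-regular. The polynomial `p(x) = (x - 2t + 1)(x + 1)(x + 3)`
kills the other eigenvalues and is nonnegative on the spectrum, so `B = p(A)` is positive
semidefinite with `B 𝟙 = p(4t+1) 𝟙` and `tr B = p(4t+1)`; this forces every diagonal entry of `B`
to equal `p(4t+1)/n`. Expanding `B_xx` then gives `(A³)_xx = 8t² + 4t`, which counts each edge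
inside the neighbourhood of `x` twice.
-/

open Finset

def cliqueExtGridSpectrum (t : ℕ) : Multiset ℝ :=
  {4 * (t : ℝ) + 1} + (2 * t) • {2 * (t : ℝ) - 1} + (t + 1) ^ 2 • {-1} + t ^ 2 • {-3}

namespace cliqueExtGridSpectrum

lemma prod_map_X_sub_C (t : ℕ) :
    ((cliqueExtGridSpectrum t).map fun a => X - C a).prod =
      (X - C (4 * (t : ℝ) + 1)) * (X - C (2 * (t : ℝ) - 1)) ^ (2 * t) *
        (X + 1) ^ ((t + 1) ^ 2) * (X + 3) ^ (t ^ 2) := by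
  simp only [cliqueExtGridSpectrum, Multiset.singleton_add, Multiset.cons_add, Multiset.map_cons,
    Multiset.map_add, Multiset.map_nsmul, Multiset.map_singleton, Multiset.prod_cons,
    Multiset.prod_add, Multiset.prod_nsmul, Multiset.prod_singleton, map_sub, map_add, map_mul,
    map_neg, map_one, map_ofNat, map_natCast, sub_neg_eq_add]
  ring

lemma card (t : ℕ) : Multiset.card (cliqueExtGridSpectrum t) = 2 * (t + 1) ^ 2 := by
  simp only [cliqueExtGridSpectrum, Multiset.singleton_add, Multiset.cons_add, Multiset.card_cons,
    Multiset.card_add, Multiset.card_nsmul, Multiset.card_singleton, mul_one]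
  ring

lemma sum_map (t : ℕ) (f : ℝ → ℝ) :
    ((cliqueExtGridSpectrum t).map f).sum =
      f (4 * t + 1) + 2 * t * f (2 * t - 1) + (t + 1) ^ 2 * f (-1) + t ^ 2 * f (-3) := by
  simp only [cliqueExtGridSpectrum, Multiset.singleton_add, Multiset.cons_add, Multiset.map_cons,
    Multiset.map_add, Multiset.map_nsmul, Multiset.map_singleton, Multiset.sum_cons,
    Multiset.sum_add, Multiset.sum_nsmul, Multiset.sum_singleton, nsmul_eq_mul]
  push_cast
  ring

lemma eq_or_eq_or_eq_or_eq_of_mem {t : ℕ} {a : ℝ} (ha : a ∈ cliqueExtGridSpectrum t) :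
    a = 4 * t + 1 ∨ a = 2 * t - 1 ∨ a = -1 ∨ a = -3 := by
  simp only [cliqueExtGridSpectrum, Multiset.mem_add, Multiset.mem_nsmul,
    Multiset.mem_singleton] at ha
  tauto

end cliqueExtGridSpectrum

namespace Matrix

variable {n : Type*} [Fintype n] [DecidableEq n]

section RCLike

variable {𝕜 : Type*} [RCLike 𝕜] {A : Matrix n n 𝕜}

lemma IsHermitian.trace_cfc_s9 (hA : A.IsHermitian) (f : ℝ → ℝ) :
    (cfc f A).trace = ∑ i, (f (hA.eigenvalues i) : 𝕜) := by
  rw [hA.cfc_eq, IsHermitian.cfc, Unitary.conjStarAlgAut_apply, trace_mul_cycle,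
    Unitary.coe_star_mul_self, one_mul, trace_diagonal]
  rfl

lemma IsHermitian.trace_aeval (hA : A.IsHermitian) (p : ℝ[X]) :
    (aeval A p).trace = ∑ i, ((p.eval (hA.eigenvalues i) : ℝ) : 𝕜) := by
  rw [← cfc_polynomial p A hA.isSelfAdjoint, hA.trace_cfc_s9]

open scoped MatrixOrder ComplexOrder in
lemma IsHermitian.posSemidef_aeval (hA : A.IsHermitian) {p : ℝ[X]}
    (hp : ∀ i, 0 ≤ p.eval (hA.eigenvalues i)) : (aeval A p).PosSemidef := by
  rw [← cfc_polynomial p A hA.isSelfAdjoint, ← nonneg_iff_posSemidef]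
  refine cfc_nonneg fun x hx => ?_
  obtain ⟨i, rfl⟩ := hA.spectrum_real_eq_range_eigenvalues ▸ hx
  exact hp i

end RCLike

lemma IsHermitian.eigenvalues_map_eq_of_charpoly_eq {A : Matrix n n ℝ} (hA : A.IsHermitian)
    {s : Multiset ℝ} (h : A.charpoly = (s.map fun a => X - C a).prod) :
    univ.val.map hA.eigenvalues = s := by
  simpa [h, roots_multiset_prod_X_sub_C] using hA.roots_charpoly_eq_eigenvalues.symm

lemma aeval_mulVec_of_mulVec_eq_smul {R : Type*} [CommRing R] {A : Matrix n n R} {v : n → R}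
    {μ : R} (h : A *ᵥ v = μ • v) (p : R[X]) : aeval A p *ᵥ v = p.eval μ • v := by
  have key := Module.End.aeval_apply_of_mem_apply_eq_smul (f := toLinAlgEquiv' A) (p := p)
    (x := v) (by simpa [toLinAlgEquiv'_apply] using h)
  rwa [aeval_algHom_apply, toLinAlgEquiv'_apply] at key

/- Testing the form on `Pi.single y 1 - n⁻¹ • 1` gives `c / n ≤ B y y` for every `y`,
and these inequalities sum to the equality `tr B = c`. -/
lemma PosSemidef.apply_self_eq_of_mulVec_one_eq {B : Matrix n n ℝ} (hB : B.PosSemidef) {c : ℝ}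
    (hB1 : B *ᵥ 1 = c • 1) (htr : B.trace = c) (y : n) :
    B y y = c / Fintype.card n := by
  have : Nonempty n := ⟨y⟩
  set N : ℝ := (Fintype.card n : ℝ)
  have hN : N ≠ 0 := Nat.cast_ne_zero.2 Fintype.card_ne_zero
  have h1B : 1 ᵥ* B = c • 1 := by
    rw [← mulVec_transpose, ← conjTranspose_eq_transpose_of_trivial, hB.isHermitian.eq, hB1]
  have hle : ∀ z, c / N ≤ B z z := by
    intro z
    have hq := hB.dotProduct_mulVec_nonneg (Pi.single z 1 - N⁻¹ • 1)
    simp only [star_trivial, mulVec_sub, mulVec_smul, mulVec_single_one, hB1, sub_dotProduct,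
      dotProduct_sub, smul_dotProduct, dotProduct_smul, single_one_dotProduct, col_apply] at hq
    have h11 : (1 : n → ℝ) ⬝ᵥ 1 = N := by simp [dotProduct, N]
    have hcol : (1 : n → ℝ) ⬝ᵥ B.col z = c := by
      simpa [dotProduct, vecMul] using congrFun h1B z
    simp only [hcol, h11, Pi.one_apply, smul_eq_mul] at hq
    rwa [inv_mul_cancel₀ hN, sub_self, mul_zero, mul_zero, sub_zero, sub_nonneg, inv_mul_eq_div]
      at hq
  have hsum : ∑ z, (B z z - c / N) = 0 := by
    rw [Finset.sum_sub_distrib, show ∑ z, B z z = B.trace from rfl, htr, Finset.sum_const,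
      Finset.card_univ, nsmul_eq_mul]
    field_simp
    ring
  have := (Finset.sum_eq_zero_iff_of_nonneg fun z _ => sub_nonneg.2 (hle z)).1 hsum y
    (Finset.mem_univ y)
  linarith

end Matrix

namespace SimpleGraph

variable {V : Type*} [Fintype V] [DecidableEq V] (G : SimpleGraph V) [DecidableRel G.Adj]

lemma sum_degree_eq_sum_eigenvalues_sq :
    ∑ v, (G.degree v : ℝ) = ∑ i, (G.isHermitian_adjMatrix ℝ).eigenvalues i ^ 2 := by
  have := (G.isHermitian_adjMatrix ℝ).trace_aeval (X ^ 2)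
  simp only [map_pow, aeval_X, eval_pow, eval_X, RCLike.ofReal_real_eq_id, id] at this
  rw [← this, sq, trace]
  exact Finset.sum_congr rfl fun v _ => (adjMatrix_mul_self_apply_self G v).symm

lemma isRegularOfDegree_of_eigenvalues_le {k : ℕ}
    (hle : ∀ i, (G.isHermitian_adjMatrix ℝ).eigenvalues i ≤ k)
    (hdeg : ∑ v, G.degree v = k * Fintype.card V) : G.IsRegularOfDegree k := by
  set A := G.adjMatrix ℝ
  have hM : (aeval A (C (k : ℝ) - X)).PosSemidef :=
    (G.isHermitian_adjMatrix ℝ).posSemidef_aeval fun i => by simpa using hle i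
  have hA1 : A *ᵥ 1 = fun v => (G.degree v : ℝ) := by
    ext v
    rw [← Function.const_one, adjMatrix_mulVec_const_apply, mul_one]
  have hM1 : aeval A (C (k : ℝ) - X) *ᵥ 1 = fun v => (k : ℝ) - G.degree v := by
    ext v
    simp [sub_mulVec, hA1]
  have hquad : star (1 : V → ℝ) ⬝ᵥ aeval A (C (k : ℝ) - X) *ᵥ 1 = 0 := by
    have hdegR : ∑ v, (G.degree v : ℝ) = k * Fintype.card V := by exact_mod_cast hdeg
    rw [hM1, star_trivial, one_dotProduct, Finset.sum_sub_distrib, hdegR, Finset.sum_const,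
      Finset.card_univ, nsmul_eq_mul, mul_comm, sub_self]
  intro v
  have := congrFun ((hM.dotProduct_mulVec_zero_iff 1).1 hquad) v
  rw [hM1] at this
  exact_mod_cast (sub_eq_zero.1 this).symm

variable {G} in
lemma IsRegularOfDegree.aeval_adjMatrix_apply_self {k : ℕ} (hreg : G.IsRegularOfDegree k)
    {p : ℝ[X]} (hp : ∀ i, 0 ≤ p.eval ((G.isHermitian_adjMatrix ℝ).eigenvalues i))
    (hsum : ∑ i, p.eval ((G.isHermitian_adjMatrix ℝ).eigenvalues i) = p.eval (k : ℝ))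
    (x : V) :
    aeval (G.adjMatrix ℝ) p x x = p.eval (k : ℝ) / Fintype.card V := by
  have hA1 : G.adjMatrix ℝ *ᵥ 1 = (k : ℝ) • 1 := by
    ext v
    rw [← Function.const_one, adjMatrix_mulVec_const_apply_of_regular hreg]
    simp
  refine ((G.isHermitian_adjMatrix ℝ).posSemidef_aeval hp).apply_self_eq_of_mulVec_one_eq
    (aeval_mulVec_of_mulVec_eq_smul hA1 p) ?_ x
  simpa only [(G.isHermitian_adjMatrix ℝ).trace_aeval, RCLike.ofReal_real_eq_id, id] using hsum

lemma card_triangle_pairs_eq_two_mul (x : V) :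
    #{p : V × V | G.Adj x p.1 ∧ G.Adj p.1 p.2 ∧ G.Adj p.2 x} =
      2 * #{e ∈ G.edgeFinset | ∀ v ∈ e, v ∈ G.neighborFinset x} := by
  classical
  let H := G ⊓ fromRel fun y z => G.Adj x y ∧ G.Adj x z
  have hE : H.edgeFinset = {e ∈ G.edgeFinset | ∀ v ∈ e, v ∈ G.neighborFinset x} := by
    ext e
    induction e using Sym2.ind
    simp only [H, edgeFinset_inf, mem_inter, mem_edgeFinset, mem_edgeSet, fromRel_adj,
      mem_neighborFinset, mem_filter, Sym2.mem_iff, forall_eq_or_imp, forall_eq]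
    grind [Adj.ne]
  rw [← hE]
  convert (two_mul_card_edgeFinset H).symm using 2
  · ext ⟨y, z⟩
    simp only [H, mem_filter, mem_univ, true_and, inf_adj, fromRel_adj]
    grind [Adj.ne, adj_comm]
  · congr!

lemma adjMatrix_pow_three_apply_self {R : Type*} [Semiring R] (x : V) :
    (G.adjMatrix R ^ 3) x x = #{p : V × V | G.Adj x p.1 ∧ G.Adj p.1 p.2 ∧ G.Adj p.2 x} := by
  rw [Finset.card_filter, Nat.cast_sum, Fintype.sum_prod_type, pow_succ, sq, mul_apply]
  simp_rw [mul_apply, Finset.sum_mul]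
  rw [Finset.sum_comm]
  refine Finset.sum_congr rfl fun y _ => Finset.sum_congr rfl fun z _ => ?_
  by_cases h1 : G.Adj x y <;> by_cases h2 : G.Adj y z <;> by_cases h3 : G.Adj z x <;>
    simp [h1, h2, h3]

variable {G} {t : ℕ}
  (hspec : univ.val.map (G.isHermitian_adjMatrix ℝ).eigenvalues = cliqueExtGridSpectrum t)
include hspec

lemma sum_eigenvalues_of_spectrum (f : ℝ → ℝ) :
    ∑ i, f ((G.isHermitian_adjMatrix ℝ).eigenvalues i) =
      ((cliqueExtGridSpectrum t).map f).sum := by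
  rw [← hspec, Multiset.map_map, sum_map_val]
  rfl

lemma eigenvalues_mem_of_spectrum (i : V) :
    (G.isHermitian_adjMatrix ℝ).eigenvalues i ∈ cliqueExtGridSpectrum t :=
  hspec ▸ Multiset.mem_map_of_mem _ (mem_univ i)

lemma card_of_spectrum : Fintype.card V = 2 * (t + 1) ^ 2 := by
  rw [← cliqueExtGridSpectrum.card, ← hspec, Multiset.card_map, card_val, card_univ]

lemma isRegularOfDegree_of_spectrum : G.IsRegularOfDegree (4 * t + 1) := by
  refine G.isRegularOfDegree_of_eigenvalues_le (fun i => ?_) ?_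
  · have : (0 : ℝ) ≤ t := t.cast_nonneg
    push_cast
    rcases cliqueExtGridSpectrum.eq_or_eq_or_eq_or_eq_of_mem (eigenvalues_mem_of_spectrum hspec i)
      with h | h | h | h <;> rw [h] <;> linarith
  · have h := G.sum_degree_eq_sum_eigenvalues_sq
    rw [sum_eigenvalues_of_spectrum hspec (· ^ 2), cliqueExtGridSpectrum.sum_map] at h
    rw [card_of_spectrum hspec]
    have hR : (∑ v, G.degree v : ℝ) = ((4 * t + 1) * (2 * (t + 1) ^ 2) : ℕ) := by
      rw [h]; push_cast; ring
    exact_mod_cast hR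

lemma adjMatrix_pow_three_apply_self_of_spectrum (x : V) :
    (G.adjMatrix ℝ ^ 3) x x = 8 * t ^ 2 + 4 * t := by
  have hreg := isRegularOfDegree_of_spectrum hspec
  set k : ℝ := ((4 * t + 1 : ℕ) : ℝ)
  have hk : k = 4 * t + 1 := by push_cast [k]; rfl
  let p : ℝ[X] := (X - C (2 * (t : ℝ) - 1)) * (X + 1) * (X + 3)
  have hp_eval (a : ℝ) : p.eval a = (a - (2 * t - 1)) * (a + 1) * (a + 3) := by simp [p]
  have hdiag := hreg.aeval_adjMatrix_apply_self (p := p) (fun i => ?nonneg) ?sum x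
  case nonneg =>
    have : (0 : ℝ) ≤ t := t.cast_nonneg
    rcases cliqueExtGridSpectrum.eq_or_eq_or_eq_or_eq_of_mem (eigenvalues_mem_of_spectrum hspec i)
      with h | h | h | h <;> rw [hp_eval, h]
    · nlinarith [mul_nonneg (mul_nonneg this this) this]
    all_goals simp
  case sum =>
    rw [sum_eigenvalues_of_spectrum hspec (p.eval ·), cliqueExtGridSpectrum.sum_map]
    simp [hp_eval]
  have hp_expand : p = X ^ 3 + (5 - 2 * (t : ℝ)) • X ^ 2 + (7 - 8 * (t : ℝ)) • X +
      C (3 - 6 * (t : ℝ)) := by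
    simp only [p, smul_eq_C_mul, map_sub, map_mul, map_ofNat, map_one]
    ring
  have hA2 : (G.adjMatrix ℝ ^ 2) x x = k := by
    rw [sq, adjMatrix_mul_self_apply_self, hreg x]
  rw [hp_eval, card_of_spectrum hspec, hp_expand] at hdiag
  simp only [map_add, map_smul, map_pow, aeval_X, aeval_C, Matrix.add_apply, Matrix.smul_apply,
    algebraMap_matrix_apply, if_true, hA2, adjMatrix_apply, G.irrefl, if_false,
    smul_eq_mul, mul_zero, add_zero, Algebra.algebraMap_self, RingHom.id_apply] at hdiag
  have hquot : (k - (2 * t - 1)) * (k + 1) * (k + 3) / ((2 * (t + 1) ^ 2 : ℕ) : ℝ) =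
      16 * t + 8 := by
    rw [hk]
    push_cast
    field_simp
    ring
  rw [hquot, hk] at hdiag
  linear_combination hdiag

end SimpleGraph

theorem stmt_9_general (t : ℕ) {V : Type*} [Fintype V] [DecidableEq V]
    (G : SimpleGraph V) [DecidableRel G.Adj]
    (hchar : (G.adjMatrix ℝ).charpoly =
      (X - C (4 * (t : ℝ) + 1)) * (X - C (2 * (t : ℝ) - 1)) ^ (2 * t) *
        (X + 1) ^ ((t + 1) ^ 2) * (X + 3) ^ (t ^ 2)) :
    ∀ x : V,
      (G.edgeFinset.filter fun e => ∀ v ∈ e, v ∈ G.neighborFinset x).card =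
        4 * t ^ 2 + 2 * t := by
  intro x
  have hspec := (G.isHermitian_adjMatrix ℝ).eigenvalues_map_eq_of_charpoly_eq
    (hchar.trans (cliqueExtGridSpectrum.prod_map_X_sub_C t).symm)
  have h : ((2 * #{e ∈ G.edgeFinset | ∀ v ∈ e, v ∈ G.neighborFinset x} : ℕ) : ℝ) =
      ((2 * (4 * t ^ 2 + 2 * t) : ℕ) : ℝ) := by
    rw [← card_triangle_pairs_eq_two_mul, ← adjMatrix_pow_three_apply_self,
      adjMatrix_pow_three_apply_self_of_spectrum hspec]
    push_cast
    ring
  have := Nat.cast_injective h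
  omega

/-- Let `t ≥ 1` and let `G` be a finite simple graph whose adjacency matrix has spectrum
`{(4t+1)^1, (2t−1)^{2t}, (−1)^{(t+1)^2}, (−3)^{t^2}}`. Then for every vertex `x` of `G`, the
number of edges of `G` joining two neighbors of `x` equals `4t^2 + 2t`. -/
theorem stmt_9 (t : ℕ) (ht : 1 ≤ t) {V : Type*} [Fintype V] [DecidableEq V]
    (G : SimpleGraph V) [DecidableRel G.Adj]
    (hchar : (G.adjMatrix ℝ).charpoly =
      (X - C (4 * (t : ℝ) + 1)) * (X - C (2 * (t : ℝ) - 1)) ^ (2 * t) *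
        (X + 1) ^ ((t + 1) ^ 2) * (X + 3) ^ (t ^ 2)) :
    ∀ x : V,
      (G.edgeFinset.filter fun e => ∀ v ∈ e, v ∈ G.neighborFinset x).card =
        4 * t ^ 2 + 2 * t :=
  stmt_9_general t G hchar
end

section
/- Let t, λ, μ be integers with t > 1, 0 ≤ λ ≤ 4, and 2t−2+λ ≤ μ ≤ 2t+⌊λ/2⌋. Then the determinant of the symmetric 3×3 matrix with rows (2t+2, 4t+λ−μ, μ), (4t+λ−μ, 2t+2, −2(t−1)+λ), (μ, −2(t−1)+λ, 2t+2) is negative; explicitly, −32t^3 − 8λt^2 + ((8λ+32)μ − 4λ^2 − 16λ + 32)t − (2λ+8)μ^2 + (2λ^2+8λ)μ − 4λ^2 − 8λ < 0. In particular this matrix is not positive semidefinite. -/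
open Matrix

lemma aux_int (t lam mu : ℤ) (ht : 1 < t) (hlam0 : 0 ≤ lam) (hlam4 : lam ≤ 4)
    (hmu1 : 2 * t - 2 + lam ≤ mu) (hmu2 : mu ≤ 2 * t + lam / 2) :
    -32 * t ^ 3 - 8 * lam * t ^ 2 +
      ((8 * lam + 32) * mu - 4 * lam ^ 2 - 16 * lam + 32) * t -
      (2 * lam + 8) * mu ^ 2 + (2 * lam ^ 2 + 8 * lam) * mu -
      4 * lam ^ 2 - 8 * lam < 0 := by
  obtain ⟨k, rfl⟩ : ∃ k, mu = 2 * t + k := ⟨mu - 2 * t, by ring⟩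
  have hk1 : lam - 2 ≤ k := by omega
  have hk2 : k ≤ 2 := by omega
  interval_cases lam <;> interval_cases k <;> nlinarith [sq_nonneg t, ht]

/-- Let `t, λ, μ` be integers with `t > 1`, `0 ≤ λ ≤ 4`, and
`2t−2+λ ≤ μ ≤ 2t+⌊λ/2⌋`. Then the determinant of the symmetric `3 × 3` matrix with rows
`(2t+2, 4t+λ−μ, μ)`, `(4t+λ−μ, 2t+2, −2(t−1)+λ)`, `(μ, −2(t−1)+λ, 2t+2)` equals
`−32t³ − 8λt² + ((8λ+32)μ − 4λ² − 16λ + 32)t − (2λ+8)μ² + (2λ²+8λ)μ − 4λ² − 8λ`, which is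
negative; in particular the matrix is not positive semidefinite. -/
theorem stmt_12 (t lam mu : ℤ) (ht : 1 < t) (hlam0 : 0 ≤ lam) (hlam4 : lam ≤ 4)
    (hmu1 : 2 * t - 2 + lam ≤ mu) (hmu2 : mu ≤ 2 * t + lam / 2) :
    ∀ M : Matrix (Fin 3) (Fin 3) ℝ,
      M = !![2 * (t : ℝ) + 2, 4 * (t : ℝ) + lam - mu, (mu : ℝ);
             4 * (t : ℝ) + lam - mu, 2 * (t : ℝ) + 2, -2 * ((t : ℝ) - 1) + lam;
             (mu : ℝ), -2 * ((t : ℝ) - 1) + lam, 2 * (t : ℝ) + 2] →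
      M.det =
          -32 * (t : ℝ) ^ 3 - 8 * lam * (t : ℝ) ^ 2 +
            ((8 * (lam : ℝ) + 32) * mu - 4 * lam ^ 2 - 16 * lam + 32) * t -
            (2 * (lam : ℝ) + 8) * mu ^ 2 + (2 * (lam : ℝ) ^ 2 + 8 * lam) * mu -
            4 * (lam : ℝ) ^ 2 - 8 * lam ∧
        M.det < 0 ∧ ¬M.PosSemidef := by
  intro M hM
  have hdet : M.det =
      -32 * (t : ℝ) ^ 3 - 8 * lam * (t : ℝ) ^ 2 +
        ((8 * (lam : ℝ) + 32) * mu - 4 * lam ^ 2 - 16 * lam + 32) * t -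
        (2 * (lam : ℝ) + 8) * mu ^ 2 + (2 * (lam : ℝ) ^ 2 + 8 * lam) * mu -
        4 * (lam : ℝ) ^ 2 - 8 * lam := by
    subst hM
    rw [Matrix.det_fin_three]
    simp [Matrix.cons_val_zero, Matrix.cons_val_one]
    ring
  have hneg : M.det < 0 := by
    rw [hdet]
    have h := aux_int t lam mu ht hlam0 hlam4 hmu1 hmu2
    have h2 : ((-32 * t ^ 3 - 8 * lam * t ^ 2 +
      ((8 * lam + 32) * mu - 4 * lam ^ 2 - 16 * lam + 32) * t -
      (2 * lam + 8) * mu ^ 2 + (2 * lam ^ 2 + 8 * lam) * mu -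
      4 * lam ^ 2 - 8 * lam : ℤ) : ℝ) < 0 := by exact_mod_cast h
    push_cast at h2
    linarith
  refine ⟨hdet, hneg, fun h => absurd ?_ (not_le.mpr hneg)⟩
  rw [h.1.det_eq_prod_eigenvalues]
  exact Finset.prod_nonneg fun i _ => h.eigenvalues_nonneg i
end

section
/- Let t > 4 be an integer and let b_1 ≥ b_2 ≥ b_3 ≥ 1 be integers satisfying b_1 + b_2 + b_3 = 4t + 4, b_1 ≤ 2t+2, b_2 ≤ 2t+1, and (b_1 − 2)^2 + b_2^2 + (b_3 + 2)^2 ≥ 8t^2 + 10. Then (b_1, b_2, b_3) is one of (2t+2, 2t+1, 1), (2t+2, 2t, 2), or (2t+1, 2t+1, 2). -/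
/-- Let `t > 4` be an integer and let `b₁ ≥ b₂ ≥ b₃ ≥ 1` be integers satisfying
`b₁ + b₂ + b₃ = 4t + 4`, `b₁ ≤ 2t+2`, `b₂ ≤ 2t+1`, and
`(b₁ − 2)² + b₂² + (b₃ + 2)² ≥ 8t² + 10`. Then `(b₁, b₂, b₃)` is one of
`(2t+2, 2t+1, 1)`, `(2t+2, 2t, 2)`, or `(2t+1, 2t+1, 2)`. -/
theorem stmt_14 (t b1 b2 b3 : ℤ) (ht : 4 < t)
    (h21 : b2 ≤ b1) (h32 : b3 ≤ b2) (hb3 : 1 ≤ b3)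
    (hsum : b1 + b2 + b3 = 4 * t + 4)
    (hb1 : b1 ≤ 2 * t + 2) (hb2 : b2 ≤ 2 * t + 1)
    (hineq : 8 * t ^ 2 + 10 ≤ (b1 - 2) ^ 2 + b2 ^ 2 + (b3 + 2) ^ 2) :
    (b1, b2, b3) = (2 * t + 2, 2 * t + 1, 1) ∨
    (b1, b2, b3) = (2 * t + 2, 2 * t, 2) ∨
    (b1, b2, b3) = (2 * t + 1, 2 * t + 1, 2) := by
  have key : 4 * t + 2 ≤ b1 + b2 := by
    by_contra h
    push_neg at h
    have hA : (0:ℤ) ≤ (t - 5) * (4 * t + 2 - b1 - b2) := by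
      apply mul_nonneg <;> linarith
    have hB : (0:ℤ) ≤ (4 * t + 1 - b1 - b2) * (b1 + 2 * b2 - 4 * t - 4) := by
      apply mul_nonneg <;> linarith
    have hC : (0:ℤ) ≤ (2 * t + 2 - b1) * (b1 - b2) := by
      apply mul_nonneg <;> linarith
    nlinarith [hA, hB, hC]
  have hb3' : b3 ≤ 2 := by linarith
  interval_cases b3
  · left
    have h1 : b1 = 2*t+2 := by omega
    have h2 : b2 = 2*t+1 := by omega
    simp [h1, h2]
  · have : b1 = 2*t+2 ∨ b1 = 2*t+1 := by omega
    rcases this with h | h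
    · right; left
      have h2 : b2 = 2*t := by omega
      simp [h, h2]
    · right; right
      have h2 : b2 = 2*t+1 := by omega
      simp [h, h2]
end
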